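/- arXiv:1302.3865 — 2 statements merged into one kernel-verified Lean document; each statement's English description precedes it below -/
import Mathlib

section
/- For a positive definite matrix x, ln x = ∫₀^∞ ((1+t)⁻¹·I − (x + t·I)⁻¹) dt, where the integral converges. -/
/-! Write `x = U diag(λ) U*`. For `t > 0` the integrand is `U diag((1+t)⁻¹ - (λᵢ+t)⁻¹) U*`, and
`r ↦ U diag(r) U*` is a continuous linear map, so it commutes with the integral. This reduces the
claim to the scalar identities `∫₀^∞ ((1+t)⁻¹ - (λ+t)⁻¹) dt = log λ`: the integrand has constant
sign and the primitive `log (1+t) - log (λ+t)` equals `-log λ` at `0` and tends to `0` at `∞`. -/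

open Matrix MeasureTheory
open scoped ComplexOrder

attribute [local instance] Matrix.frobeniusNormedAddCommGroup Matrix.frobeniusNormedSpace

noncomputable instance frobeniusContinuousENorm {n : Type*} [Fintype n] :
    ContinuousENorm (Matrix n n ℂ) :=
  SeminormedAddGroup.toContinuousENorm

open Filter Set Topology

namespace Real

lemma tendsto_log_add_sub_log_add_atTop (a b : ℝ) :
    Tendsto (fun t => log (a + t) - log (b + t)) atTop (𝓝 0) := by
  have key := (tendsto_log_comp_add_sub_log a).sub (tendsto_log_comp_add_sub_log b)
  simp only [sub_self, sub_sub_sub_cancel_right] at key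
  simpa only [add_comm] using key

lemma hasDerivAt_log_add_sub_log_add {a b t : ℝ} (ha : 0 < a + t) (hb : 0 < b + t) :
    HasDerivAt (fun s => log (a + s) - log (b + s)) ((a + t)⁻¹ - (b + t)⁻¹) t := by
  have hderiv (c : ℝ) (hc : 0 < c + t) : HasDerivAt (fun s => log (c + s)) (c + t)⁻¹ t := by
    simpa using ((hasDerivAt_id t).const_add c).log hc.ne'
  exact (hderiv a ha).sub (hderiv b hb)

variable {a b : ℝ}

private lemma integrableOn_and_integral_Ioi_inv_add_sub_inv_add_of_le (ha : 0 < a) (hab : a ≤ b) :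
    IntegrableOn (fun t => (a + t)⁻¹ - (b + t)⁻¹) (Ioi 0) ∧
      ∫ t in Ioi 0, ((a + t)⁻¹ - (b + t)⁻¹) = log b - log a := by
  have hderiv (t : ℝ) (ht : t ∈ Ici 0) :=
    hasDerivAt_log_add_sub_log_add (a := a) (b := b) (t := t)
      (by rw [mem_Ici] at ht; linarith) (by rw [mem_Ici] at ht; linarith)
  have hnonneg (t : ℝ) (ht : t ∈ Ioi 0) : 0 ≤ (a + t)⁻¹ - (b + t)⁻¹ := by
    rw [mem_Ioi] at ht
    exact sub_nonneg.2 (inv_anti₀ (by linarith) (by linarith))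
  have hlim := tendsto_log_add_sub_log_add_atTop a b
  refine ⟨integrableOn_Ioi_deriv_of_nonneg' hderiv hnonneg hlim, ?_⟩
  rw [integral_Ioi_of_hasDerivAt_of_nonneg' hderiv hnonneg hlim]
  simp

lemma integrableOn_Ioi_inv_add_sub_inv_add (ha : 0 < a) (hb : 0 < b) :
    IntegrableOn (fun t => (a + t)⁻¹ - (b + t)⁻¹) (Ioi 0) := by
  rcases le_total a b with hab | hba
  · exact (integrableOn_and_integral_Ioi_inv_add_sub_inv_add_of_le ha hab).1
  · simpa only [Pi.neg_def, neg_sub] using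
      (integrableOn_and_integral_Ioi_inv_add_sub_inv_add_of_le hb hba).1.neg

lemma integral_Ioi_inv_add_sub_inv_add (ha : 0 < a) (hb : 0 < b) :
    ∫ t in Ioi 0, ((a + t)⁻¹ - (b + t)⁻¹) = log b - log a := by
  rcases le_total a b with hab | hba
  · exact (integrableOn_and_integral_Ioi_inv_add_sub_inv_add_of_le ha hab).2
  · rw [← neg_sub (log a), ← (integrableOn_and_integral_Ioi_inv_add_sub_inv_add_of_le hb hba).2,
      ← integral_neg]
    simp

end Real

namespace Matrix.IsHermitian

variable {n : Type*} [Fintype n] [DecidableEq n]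

section RCLike

variable {𝕜 : Type*} [RCLike 𝕜] {A : Matrix n n 𝕜}

noncomputable def conjDiagonalCLM (hA : A.IsHermitian) : (n → ℝ) →L[ℝ] Matrix n n 𝕜 :=
  LinearMap.toContinuousLinearMap
    { toFun r := Unitary.conjStarAlgAut 𝕜 _ hA.eigenvectorUnitary (diagonal (RCLike.ofReal ∘ r))
      map_add' r s := by
        rw [← map_add, diagonal_add]
        congr 2
        ext i
        simp
      map_smul' c r := by
        rw [RingHom.id_apply, RCLike.real_smul_eq_coe_smul (K := 𝕜) (E := Matrix n n 𝕜), ← map_smul,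
          ← diagonal_smul]
        congr 2
        ext i
        simp }

lemma cfc_eq_conjDiagonalCLM (hA : A.IsHermitian) (f : ℝ → ℝ) :
    hA.cfc f = hA.conjDiagonalCLM (f ∘ hA.eigenvalues) :=
  rfl

lemma smul_one_sub_inv_add_smul_one_eq_cfc (hA : A.IsHermitian) (c : ℝ) {t : ℝ}
    (ht : -t ∉ spectrum ℝ A) :
    c • 1 - (A + t • 1)⁻¹ = hA.cfc (fun r => c - (r + t)⁻¹) := by
  have hne (r : ℝ) (hr : r ∈ spectrum ℝ A) : r + t ≠ 0 := by
    rintro h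
    exact ht (eq_neg_of_add_eq_zero_left h ▸ hr)
  have hcont : ContinuousOn (fun r : ℝ => r + t) (spectrum ℝ A) := by fun_prop
  rw [← hA.cfc_eq, cfc_sub (fun _ => c) (fun r => (r + t)⁻¹) A continuousOn_const (hcont.inv₀ hne),
    cfc_const c A, cfc_inv (f := fun r : ℝ => r + t) (a := A) hne, cfc_add_const t (fun r => r) A,
    cfc_id' ℝ A, nonsing_inv_eq_ringInverse, Algebra.algebraMap_eq_smul_one,
    Algebra.algebraMap_eq_smul_one]

end RCLike

variable {A : Matrix n n ℂ} {X : Type*} [MeasurableSpace X] {μ : Measure X} {f : X → ℝ → ℝ}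

lemma integrable_cfc (hA : A.IsHermitian)
    (hf : ∀ i, Integrable (fun x => f x (hA.eigenvalues i)) μ) :
    Integrable (fun x => hA.cfc (f x)) μ :=
  hA.conjDiagonalCLM.integrable_comp (Integrable.of_eval hf)

lemma integral_cfc (hA : A.IsHermitian)
    (hf : ∀ i, Integrable (fun x => f x (hA.eigenvalues i)) μ) :
    ∫ x, hA.cfc (f x) ∂μ = hA.cfc (fun r => ∫ x, f x r ∂μ) := by
  refine (hA.conjDiagonalCLM.integral_comp_comm (Integrable.of_eval hf)).trans ?_
  exact congrArg hA.conjDiagonalCLM (funext (eval_integral hf))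

end Matrix.IsHermitian

/-- For a positive definite matrix `x`,
`ln x = ∫₀^∞ ((1+t)⁻¹ • I − (x + t • I)⁻¹) dt`, and the integral converges. -/
theorem log_posDef_eq_integral
    {n : Type*} [Fintype n] [DecidableEq n] (x : Matrix n n ℂ) (hx : x.PosDef) :
    IntegrableOn (fun t : ℝ => (1 + t)⁻¹ • (1 : Matrix n n ℂ) - (x + t • 1)⁻¹)
      (Set.Ioi (0 : ℝ)) ∧
    hx.1.cfc Real.log
      = ∫ t in Set.Ioi (0 : ℝ), ((1 + t)⁻¹ • (1 : Matrix n n ℂ) - (x + t • 1)⁻¹) := by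
  have hpos := hx.eigenvalues_pos
  have hint (i : n) := Real.integrableOn_Ioi_inv_add_sub_inv_add one_pos (hpos i)
  have hresolvent : EqOn (fun t : ℝ => (1 + t)⁻¹ • (1 : Matrix n n ℂ) - (x + t • 1)⁻¹)
      (fun t => hx.1.cfc fun r => (1 + t)⁻¹ - (r + t)⁻¹) (Ioi 0) := by
    intro t ht
    have hspec : -t ∉ spectrum ℝ x := by
      rw [hx.1.spectrum_real_eq_range_eigenvalues]
      rintro ⟨i, hi⟩
      linarith [hpos i, mem_Ioi.1 ht]
    exact hx.1.smul_one_sub_inv_add_smul_one_eq_cfc _ hspec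
  refine ⟨(integrableOn_congr_fun hresolvent measurableSet_Ioi).2 (hx.1.integrable_cfc hint), ?_⟩
  rw [setIntegral_congr_fun measurableSet_Ioi hresolvent,
    hx.1.integral_cfc (f := fun t r => (1 + t)⁻¹ - (r + t)⁻¹) hint,
    hx.1.cfc_eq_conjDiagonalCLM, hx.1.cfc_eq_conjDiagonalCLM]
  congr 1
  funext i
  simp [Real.integral_Ioi_inv_add_sub_inv_add one_pos (hpos i)]
end

section
/- Let {ρ_x}_{x∈X} be a finite family of density matrices, weights p(x) ≥ 0 summing to 1, ρ = Σ_x p(x) ρ_x positive definite, and x₀ an index maximizing p. For any family of Hermitian matrices {H_x} with 0 ≤ H_x ≤ I and H_{x₀} = I, the quantity Λ = −i Σ_x p(x) Tr(H_x [ρ_x, ln ρ]) satisfies |Λ| ≤ 2 Σ_{x≠x₀} Σ_{y≠x} √(p(x)p(y)). -/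
/-!
Diagonalise `ρ = U diag(r) Uᴴ`. In that basis the commutator with `ln ρ` is the Hadamard product
of the commutator with `diag(r)` and the Loewner matrix `Φ j k = (ln r k - ln r j) / (r k - r j)`,
which is positive semidefinite because `Φ j k = ∫₀^∞ ds / ((r j + s) (r k + s))`. Since
`diag(r) = Σ_y P y` with `P y = p y • ρ y`, the `x`-th term becomes
`Σ_{y ≠ x} tr ([P x, P y] M)` with `M = H x ⊙ Φ` positive semidefinite (Schur product theorem),
so Cauchy–Schwarz for the semi-inner product `⟪A, B⟫ = tr (B M Aᴴ)` bounds it by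
`2 Σ_{y ≠ x} ‖P x‖ ‖P y‖`. Finally `H x ≤ 1` and `0 ≤ P ≤ diag(r)` give
`‖P‖² ≤ tr (P diag(r)⁻¹ P) ≤ tr P = p`, and the `x₀` term vanishes because `H x₀ = 1`.
-/

open Matrix Finset
open scoped ComplexOrder

noncomputable def logDivDiff (a b : ℝ) : ℝ :=
  if a = b then a⁻¹ else (Real.log b - Real.log a) / (b - a)

theorem logDivDiff_comm (a b : ℝ) : logDivDiff a b = logDivDiff b a := by
  unfold logDivDiff
  split_ifs with h h' h'
  · rw [h]
  · exact absurd h.symm h'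
  · exact absurd h'.symm h
  · rw [← neg_sub b a, ← neg_sub (Real.log b), neg_div_neg_eq]

theorem logDivDiff_self (a : ℝ) : logDivDiff a a = a⁻¹ := if_pos rfl

theorem sub_mul_logDivDiff (a b : ℝ) : (b - a) * logDivDiff a b = Real.log b - Real.log a := by
  unfold logDivDiff
  split_ifs with h
  · simp [h]
  · exact mul_div_cancel₀ _ (sub_ne_zero.mpr (Ne.symm h))

open MeasureTheory Set Filter Topology in
theorem integrableOn_and_integral_eq_logDivDiff {a b : ℝ} (ha : 0 < a) (hb : 0 < b) :
    IntegrableOn (fun s => ((a + s) * (b + s))⁻¹) (Ioi 0) ∧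
      ∫ s in Ioi (0 : ℝ), ((a + s) * (b + s))⁻¹ = logDivDiff a b := by
  have of_primitive : ∀ g : ℝ → ℝ, (∀ s ∈ Ici (0 : ℝ), HasDerivAt g ((a + s) * (b + s))⁻¹ s) →
      Tendsto g atTop (𝓝 0) → g 0 = -logDivDiff a b →
      IntegrableOn (fun s => ((a + s) * (b + s))⁻¹) (Ioi 0) ∧
        ∫ s in Ioi (0 : ℝ), ((a + s) * (b + s))⁻¹ = logDivDiff a b := by
    intro g hg hlim h0
    have hpos : ∀ s ∈ Ioi (0 : ℝ), 0 ≤ ((a + s) * (b + s))⁻¹ := fun s (hs : 0 < s) => by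
      positivity
    refine ⟨integrableOn_Ioi_deriv_of_nonneg' hg hpos hlim, ?_⟩
    rw [integral_Ioi_of_hasDerivAt_of_nonneg' hg hpos hlim, h0, zero_sub, neg_neg]
  rcases eq_or_ne a b with rfl | hab
  · refine of_primitive (fun s => -(a + s)⁻¹) (fun s (hs : 0 ≤ s) => ?_) ?_ ?_
    · refine (((hasDerivAt_id' s).const_add a).inv (by positivity)).neg.congr_deriv ?_
      rw [neg_div, neg_neg, one_div, sq, mul_inv]
    · simpa using (tendsto_atTop_add_const_left _ a tendsto_id).inv_tendsto_atTop.neg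
    · simp [logDivDiff_self]
  · refine of_primitive (fun s => (Real.log (a + s) - Real.log (b + s)) / (b - a))
      (fun s (hs : 0 ≤ s) => ?_) ?_ ?_
    · have h₁ := ((hasDerivAt_id' s).const_add a).log (by positivity)
      have h₂ := ((hasDerivAt_id' s).const_add b).log (by positivity)
      refine ((h₁.sub h₂).div_const (b - a)).congr_deriv ?_
      have : a + s ≠ 0 := by positivity
      have : b + s ≠ 0 := by positivity
      field_simp
      ring
    · have h := ((Real.tendsto_log_comp_add_sub_log a).sub
        (Real.tendsto_log_comp_add_sub_log b)).div_const (b - a)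
      simpa [add_comm, sub_sub_sub_cancel_right] using h
    · simp only [add_zero, logDivDiff, if_neg hab]
      rw [← neg_div, neg_sub]

namespace Matrix

variable {n 𝕜 : Type*} [Fintype n] [RCLike 𝕜]

theorem trace_mul_hadamard {R : Type*} [CommSemiring R] (A B C : Matrix n n R) :
    (A * (B ⊙ C)).trace = (B * (A ⊙ Cᵀ)).trace := by
  simp only [trace, diag, mul_apply, hadamard_apply, transpose_apply]
  rw [sum_comm]
  exact sum_congr rfl fun i _ => sum_congr rfl fun j _ => by ring

theorem norm_trace_commutator_mul_le {M A B : Matrix n n 𝕜} (hM : M.PosSemidef)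
    (hA : A.IsHermitian) (hB : B.IsHermitian) :
    ‖((A * B - B * A) * M).trace‖ ≤
      2 * (√(RCLike.re (A * M * A).trace) * √(RCLike.re (B * M * B).trace)) := by
  let := M.toMatrixSeminormedAddCommGroup hM
  let := M.toMatrixInnerProductSpace hM
  have inner_eq (X Y : Matrix n n 𝕜) (hX : X.IsHermitian) :
      inner 𝕜 X Y = (Y * M * X).trace := by
    calc inner 𝕜 X Y = (Y * M * Xᴴ).trace := rfl
      _ = (Y * M * X).trace := by rw [hX.eq]
  have hAB : ((A * B - B * A) * M).trace = inner 𝕜 A B - inner 𝕜 B A := by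
    rw [inner_eq _ _ hA, inner_eq _ _ hB, trace_mul_cycle B M A, trace_mul_cycle A M B, sub_mul,
      trace_sub]
  have hnorm (X : Matrix n n 𝕜) (hX : X.IsHermitian) : ‖X‖ = √(RCLike.re (X * M * X).trace) := by
    rw [norm_eq_sqrt_re_inner (𝕜 := 𝕜), inner_eq _ _ hX]
  rw [hAB, ← hnorm A hA, ← hnorm B hB, two_mul]
  calc ‖inner 𝕜 A B - inner 𝕜 B A‖ ≤ ‖inner 𝕜 A B‖ + ‖inner 𝕜 B A‖ := norm_sub_le _ _
    _ ≤ ‖A‖ * ‖B‖ + ‖A‖ * ‖B‖ := by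
      gcongr
      · exact norm_inner_le_norm A B
      · exact (norm_inner_le_norm B A).trans_eq (mul_comm _ _)

theorem PosSemidef.sub_mul_inv_mul [DecidableEq n] {D P : Matrix n n 𝕜} (hD : D.PosDef)
    (hP : P.PosSemidef) (hPD : (D - P).PosSemidef) : (P - P * D⁻¹ * P).PosSemidef := by
  have hinv : D⁻¹ * D = 1 := nonsing_inv_mul D ((isUnit_iff_isUnit_det D).mp hD.isUnit)
  have hinv_herm : (D⁻¹)ᴴ = D⁻¹ := by rw [conjTranspose_nonsing_inv, hD.1.eq]
  -- completing the square: the Schur complement of `D` in the block matrix `[[D, P], [P, P]]`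
  have hsq : P - P * D⁻¹ * P =
      (1 - D⁻¹ * P)ᴴ * P * (1 - D⁻¹ * P) + (D⁻¹ * P)ᴴ * (D - P) * (D⁻¹ * P) := by
    calc P - P * D⁻¹ * P = P - P * D⁻¹ * P - P * D⁻¹ * P + P * (D⁻¹ * D) * D⁻¹ * P := by
          rw [hinv, mul_one]; abel
      _ = _ := by
          simp only [conjTranspose_sub, conjTranspose_one, conjTranspose_mul, hinv_herm, hP.1.eq]
          noncomm_ring
  rw [hsq]
  exact (hP.conjTranspose_mul_mul_same _).add (hPD.conjTranspose_mul_mul_same _)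

theorem re_trace_mul_mul_conjTranspose_le {M M' : Matrix n n 𝕜} (hMM' : (M' - M).PosSemidef)
    (A : Matrix n n 𝕜) :
    RCLike.re (A * M * Aᴴ).trace ≤ RCLike.re (A * M' * Aᴴ).trace := by
  have h := (RCLike.nonneg_iff.mp (hMM'.mul_mul_conjTranspose_same A).trace_nonneg).1
  rwa [mul_sub, sub_mul, trace_sub, map_sub, sub_nonneg] at h

theorem trace_conjStarAlgAut [DecidableEq n] (u : unitary (Matrix n n 𝕜)) (A : Matrix n n 𝕜) :
    (Unitary.conjStarAlgAut 𝕜 _ u A).trace = A.trace := by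
  rw [Unitary.conjStarAlgAut_apply, trace_mul_cycle, Unitary.coe_star_mul_self, one_mul]

theorem PosSemidef.conjStarAlgAut [DecidableEq n] {A : Matrix n n 𝕜} (hA : A.PosSemidef)
    (u : unitary (Matrix n n 𝕜)) : (Unitary.conjStarAlgAut 𝕜 _ u A).PosSemidef := by
  simpa [star_eq_conjTranspose] using hA.conjTranspose_mul_mul_same (star (u : Matrix n n 𝕜))

theorem IsHermitian.conjStarAlgAut_star_eigenvectorUnitary_cfc [DecidableEq n]
    {A : Matrix n n 𝕜} (hA : A.IsHermitian) (f : ℝ → ℝ) :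
    Unitary.conjStarAlgAut 𝕜 _ (star hA.eigenvectorUnitary) (hA.cfc f) =
      diagonal (RCLike.ofReal ∘ f ∘ hA.eigenvalues) := by
  rw [IsHermitian.cfc, ← Unitary.conjStarAlgAut_mul_apply, Unitary.star_mul_self, map_one]
  rfl

noncomputable def logLoewner (r : n → ℝ) : Matrix n n ℂ :=
  of fun j k => (logDivDiff (r j) (r k) : ℂ)

open MeasureTheory Set in
theorem posSemidef_logLoewner {r : n → ℝ} (hr : ∀ j, 0 < r j) : (logLoewner r).PosSemidef := by
  refine .of_dotProduct_mulVec_nonneg (by ext j k; simp [logLoewner, logDivDiff_comm]) fun x => ?_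
  let f : ℝ → ℂ := fun s => ∑ j, x j * ((r j + s)⁻¹ : ℝ)
  have hint (j k : n) : IntegrableOn
      (fun s : ℝ => star (x j) * x k * (((r j + s) * (r k + s))⁻¹ : ℝ)) (Ioi 0) :=
    (integrableOn_and_integral_eq_logDivDiff (hr j) (hr k)).1.ofReal.const_mul _
  have hquad : star x ⬝ᵥ (logLoewner r *ᵥ x) = ((∫ s in Ioi (0 : ℝ), ‖f s‖ ^ 2 : ℝ) : ℂ) := by
    rw [← integral_complex_ofReal]
    calc star x ⬝ᵥ (logLoewner r *ᵥ x)
        = ∑ j, ∑ k, ∫ s in Ioi (0 : ℝ),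
            star (x j) * x k * (((r j + s) * (r k + s))⁻¹ : ℝ) := by
          simp only [dotProduct, mulVec, logLoewner, of_apply, mul_sum]
          refine sum_congr rfl fun j _ => sum_congr rfl fun k _ => ?_
          rw [integral_const_mul, integral_complex_ofReal,
            (integrableOn_and_integral_eq_logDivDiff (hr j) (hr k)).2, Pi.star_apply]
          ring
      _ = ∫ s in Ioi (0 : ℝ), ∑ j, ∑ k, star (x j) * x k * (((r j + s) * (r k + s))⁻¹ : ℝ) := by
          rw [integral_finsetSum _ fun j _ => integrable_finsetSum _ fun k _ => hint j k]
          exact sum_congr rfl fun j _ => (integral_finsetSum _ fun k _ => hint j k).symm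
      _ = ∫ s in Ioi (0 : ℝ), ((‖f s‖ ^ 2 : ℝ) : ℂ) := by
          congr 1 with s
          rw [Complex.ofReal_pow, ← Complex.conj_mul', map_sum, sum_mul]
          simp only [f, mul_sum]
          refine sum_congr rfl fun j _ => sum_congr rfl fun k _ => ?_
          simp only [map_mul, Complex.conj_ofReal, mul_inv, Complex.ofReal_mul, Complex.star_def]
          ring
  rw [hquad]
  exact Complex.zero_le_real.mpr (integral_nonneg fun s => sq_nonneg _)

omit [Fintype n] in
theorem transpose_logLoewner (r : n → ℝ) : (logLoewner r)ᵀ = logLoewner r := by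
  ext j k
  simp [logLoewner, logDivDiff_comm]

omit [Fintype n] in
theorem one_hadamard_logLoewner [DecidableEq n] (r : n → ℝ) :
    1 ⊙ logLoewner r = diagonal fun j => ((r j)⁻¹ : ℂ) := by
  ext j k
  rcases eq_or_ne j k with rfl | hjk
  · simp [logLoewner, logDivDiff_self]
  · simp [one_apply_ne hjk, hjk]

theorem commutator_diagonal_log [DecidableEq n] (r : n → ℝ) (P : Matrix n n ℂ) :
    P * diagonal (fun j => (Real.log (r j) : ℂ)) - diagonal (fun j => (Real.log (r j) : ℂ)) * P =
      (P * diagonal (fun j => (r j : ℂ)) - diagonal (fun j => (r j : ℂ)) * P) ⊙ logLoewner r := by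
  ext j k
  simp only [sub_apply, mul_diagonal, diagonal_mul, hadamard_apply, logLoewner, of_apply]
  have h := congrArg Complex.ofReal (sub_mul_logDivDiff (r j) (r k))
  push_cast at h
  linear_combination -P j k * h

theorem re_trace_mul_hadamard_logLoewner_mul_le [DecidableEq n] {r : n → ℝ} (hr : ∀ j, 0 < r j)
    {G P : Matrix n n ℂ} (hG1 : (1 - G).PosSemidef) (hP : P.PosSemidef)
    (hPD : (diagonal (fun j => (r j : ℂ)) - P).PosSemidef) :
    (P * (G ⊙ logLoewner r) * P).trace.re ≤ P.trace.re := by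
  have hD : (diagonal fun j => (r j : ℂ)).PosDef := posDef_diagonal_iff.mpr fun j => by
    exact_mod_cast hr j
  have hDinv : (diagonal fun j => (r j : ℂ))⁻¹ = 1 ⊙ logLoewner r := by
    rw [one_hadamard_logLoewner]
    refine inv_eq_left_inv ?_
    rw [diagonal_mul_diagonal, ← diagonal_one]
    exact congrArg diagonal (funext fun j => inv_mul_cancel₀ (by exact_mod_cast (hr j).ne'))
  have hschur := (hP.sub_mul_inv_mul hD hPD).trace_nonneg
  rw [hDinv, trace_sub, sub_nonneg] at hschur
  calc (P * (G ⊙ logLoewner r) * P).trace.re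
      ≤ (P * (1 ⊙ logLoewner r) * P).trace.re := by
        have hle : (1 ⊙ logLoewner r - G ⊙ logLoewner r).PosSemidef := by
          have e : 1 ⊙ logLoewner r - G ⊙ logLoewner r = (1 - G) ⊙ logLoewner r := by
            ext; simp [sub_mul]
          exact e ▸ hG1.hadamard (posSemidef_logLoewner hr)
        simpa only [hP.1.eq, RCLike.re_to_complex] using re_trace_mul_mul_conjTranspose_le hle P
    _ ≤ P.trace.re := (Complex.le_def.mp hschur).1

theorem norm_trace_mul_commutator_log_le [DecidableEq n] {ι : Type*} [Fintype ι] [DecidableEq ι]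
    {r : n → ℝ} (hr : ∀ j, 0 < r j) {P : ι → Matrix n n ℂ} (hP : ∀ y, (P y).PosSemidef)
    (hsum : ∑ y, P y = diagonal fun j => (r j : ℂ)) {p : ι → ℝ} (htr : ∀ y, (P y).trace = p y)
    {G : Matrix n n ℂ} (hG : G.PosSemidef) (hG1 : (1 - G).PosSemidef) (x : ι) :
    ‖(G * (P x * diagonal (fun j => (Real.log (r j) : ℂ)) -
        diagonal (fun j => (Real.log (r j) : ℂ)) * P x)).trace‖ ≤
      2 * ∑ y ∈ univ.erase x, √(p x * p y) := by
  set M := G ⊙ logLoewner r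
  have hM : M.PosSemidef := hG.hadamard (posSemidef_logLoewner hr)
  have hp y : 0 ≤ p y := by exact_mod_cast htr y ▸ (hP y).trace_nonneg
  have hnorm y : RCLike.re (P y * M * P y).trace ≤ p y := by
    have hPD : ((diagonal fun j => (r j : ℂ)) - P y).PosSemidef := by
      rw [← hsum, ← sum_erase_eq_sub (mem_univ y)]
      exact sum_induction _ _ (fun _ _ => PosSemidef.add) .zero fun z _ => hP z
    simpa [htr] using re_trace_mul_hadamard_logLoewner_mul_le hr hG1 (hP y) hPD
  calc _ = ‖((P x * diagonal (fun j => (r j : ℂ)) - diagonal (fun j => (r j : ℂ)) * P x) *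
          M).trace‖ := by
        rw [commutator_diagonal_log, trace_mul_hadamard, transpose_logLoewner]
    _ = ‖∑ y ∈ univ.erase x, ((P x * P y - P y * P x) * M).trace‖ := by
        rw [← hsum, mul_sum, sum_mul, ← sum_sub_distrib, sum_mul, trace_sum,
          ← add_sum_erase _ _ (mem_univ x), sub_self, zero_mul, trace_zero, zero_add]
    _ ≤ ∑ y ∈ univ.erase x, 2 * (√(p x) * √(p y)) := by
        refine (norm_sum_le _ _).trans (sum_le_sum fun y _ => ?_)
        refine (norm_trace_commutator_mul_le hM (hP x).1 (hP y).1).trans ?_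
        gcongr
        exacts [hnorm x, hnorm y]
    _ = 2 * ∑ y ∈ univ.erase x, √(p x * p y) := by
        simp_rw [mul_sum, Real.sqrt_mul (hp x)]

end Matrix

theorem mixing_rate_general_bound_general {ι n : Type*} [Fintype ι] [DecidableEq ι]
    [Fintype n] [DecidableEq n]
    (p : ι → ℝ) (ρ : ι → Matrix n n ℂ)
    (hp : ∀ x, 0 ≤ p x)
    (hρx : ∀ x, (ρ x).PosSemidef) (htr : ∀ x, (ρ x).trace = 1)
    (hρ : (∑ x, p x • ρ x).PosDef)
    (x₀ : ι)
    (H : ι → Matrix n n ℂ)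
    (hH0 : ∀ x, (H x).PosSemidef)
    (hH1 : ∀ x, ((1 : Matrix n n ℂ) - H x).PosSemidef)
    (hHx₀ : H x₀ = 1) :
    ‖((-Complex.I) * ∑ x, (p x : ℂ) *
        (H x * (ρ x * hρ.1.cfc Real.log - hρ.1.cfc Real.log * ρ x)).trace)‖
      ≤ 2 * ∑ x ∈ univ.erase x₀, ∑ y ∈ univ.erase x,
          Real.sqrt (p x * p y) := by
  set L := hρ.1.cfc Real.log
  set U := hρ.1.eigenvectorUnitary
  let ψ := Unitary.conjStarAlgAut ℂ (Matrix n n ℂ) (star U)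
  have hψL : ψ L = diagonal fun j => (Real.log (hρ.1.eigenvalues j) : ℂ) :=
    hρ.1.conjStarAlgAut_star_eigenvectorUnitary_cfc Real.log
  have hsum : ∑ x, ψ (p x • ρ x) = diagonal fun j => (hρ.1.eigenvalues j : ℂ) := by
    rw [← map_sum]
    exact hρ.1.conjStarAlgAut_star_eigenvectorUnitary
  have hterm x : (p x : ℂ) * (H x * (ρ x * L - L * ρ x)).trace =
      (ψ (H x) * (ψ (p x • ρ x) * ψ L - ψ L * ψ (p x • ρ x))).trace := by
    rw [← map_mul, ← map_mul, ← map_sub, ← map_mul, trace_conjStarAlgAut, smul_mul_assoc,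
      mul_smul_comm, ← smul_sub, mul_smul_comm, trace_smul, Complex.real_smul]
  have hbound x : ‖(ψ (H x) * (ψ (p x • ρ x) * ψ L - ψ L * ψ (p x • ρ x))).trace‖ ≤
      2 * ∑ y ∈ univ.erase x, √(p x * p y) := by
    have hG1 := (hH1 x).conjStarAlgAut (star U)
    rw [map_sub, map_one] at hG1
    rw [hψL]
    exact norm_trace_mul_commutator_log_le hρ.eigenvalues_pos
      (fun y => ((hρx y).smul (hp y)).conjStarAlgAut _) hsum
      (fun y => by rw [trace_conjStarAlgAut, trace_smul, htr, Complex.real_smul, mul_one])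
      ((hH0 x).conjStarAlgAut _) hG1 x
  have hx₀ : (ψ (H x₀) * (ψ (p x₀ • ρ x₀) * ψ L - ψ L * ψ (p x₀ • ρ x₀))).trace = 0 := by
    rw [hHx₀, map_one, one_mul, trace_sub, trace_mul_comm, sub_self]
  rw [norm_mul, norm_neg, Complex.norm_I, one_mul, mul_sum]
  simp_rw [hterm]
  rw [← add_sum_erase _ _ (mem_univ x₀), hx₀, zero_add]
  exact (norm_sum_le _ _).trans (sum_le_sum fun x _ => hbound x)

/-- General mixing-rate bound: for an ensemble `{(p x, ρ x)}` with `ρ = Σ p x • ρ x`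
positive definite, `x₀` maximizing `p`, and Hamiltonians `0 ≤ H x ≤ I` with `H x₀ = I`,
the mixing rate `Λ = −i Σ_x p x Tr(H x [ρ x, ln ρ])` satisfies
`|Λ| ≤ 2 Σ_{x ≠ x₀} Σ_{y ≠ x} √(p x · p y)`. -/
theorem mixing_rate_general_bound {ι n : Type*} [Fintype ι] [DecidableEq ι]
    [Fintype n] [DecidableEq n]
    (p : ι → ℝ) (ρ : ι → Matrix n n ℂ)
    (hp : ∀ x, 0 ≤ p x) (hp1 : ∑ x, p x = 1)
    (hρx : ∀ x, (ρ x).PosSemidef) (htr : ∀ x, (ρ x).trace = 1)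
    (hρ : (∑ x, p x • ρ x).PosDef)
    (x₀ : ι) (hx₀ : ∀ x, p x ≤ p x₀)
    (H : ι → Matrix n n ℂ)
    (hH0 : ∀ x, (H x).PosSemidef)
    (hH1 : ∀ x, ((1 : Matrix n n ℂ) - H x).PosSemidef)
    (hHx₀ : H x₀ = 1) :
    ‖((-Complex.I) * ∑ x, (p x : ℂ) *
        (H x * (ρ x * hρ.1.cfc Real.log - hρ.1.cfc Real.log * ρ x)).trace)‖
      ≤ 2 * ∑ x ∈ univ.erase x₀, ∑ y ∈ univ.erase x,
          Real.sqrt (p x * p y) :=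
  mixing_rate_general_bound_general p ρ hp hρx htr hρ x₀ H hH0 hH1 hHx₀
end
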